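/- For every set of atoms I, the set T^π_P(I) is closed under variable renaming: if A ∈ T^π_P(I) and A' is a variant of A (obtained by applying a renaming), then A' ∈ T^π_P(I). -/

import Mathlib

/-- First-order terms over a signature with constants and a binary application,
    with variables indexed by naturals. -/
inductive Tm : Type
  | var : ℕ → Tm
  | const : ℕ → Tm
  | app : Tm → Tm → Tm
deriving DecidableEq

/-- Applying a substitution (a map from variables to terms) to a term. -/
def Tm.subst (σ : ℕ → Tm) : Tm → Tm
  | .var x => σ x
  | .const c => .const c
  | .app s t => .app (s.subst σ) (t.subst σ)

/-- Composition of substitutions: first `θ`, then `δ`. -/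
def Subst.comp (θ δ : ℕ → Tm) : ℕ → Tm := fun x => (θ x).subst δ

/-- A renaming is a substitution given by a bijection on variables. -/
def IsRenaming (γ : ℕ → Tm) : Prop :=
  ∃ f : ℕ → ℕ, Function.Bijective f ∧ γ = fun x => Tm.var (f x)

/-- `θ` unifies `s` and `t`. -/
def IsUnifier (s t : Tm) (θ : ℕ → Tm) : Prop := s.subst θ = t.subst θ

/-- `θ` is a most general unifier of `s` and `t`: every unifier factors through it. -/
def IsMGU (s t : Tm) (θ : ℕ → Tm) : Prop :=
  IsUnifier s t θ ∧ ∀ σ, IsUnifier s t σ → ∃ δ, ∀ x, σ x = (θ x).subst δ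

/-- The set of variables of a term. -/
def Tm.vars : Tm → Finset ℕ
  | .var x => {x}
  | .const _ => ∅
  | .app s t => s.vars ∪ t.vars

/-- A term is ground if it has no variables. -/
def Tm.Ground (t : Tm) : Prop := t.vars = ∅

/-- An atom `p(t₁,…,tₙ)`: a predicate symbol together with its argument list. -/
structure Atom where
  pred : ℕ
  args : List Tm
deriving DecidableEq

/-- Applying a substitution to an atom. -/
def Atom.subst (θ : ℕ → Tm) (A : Atom) : Atom := ⟨A.pred, A.args.map (Tm.subst θ)⟩

/-- The variables of an atom. -/
def Atom.vars (A : Atom) : Finset ℕ := A.args.foldr (fun t s => t.vars ∪ s) ∅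

/-- A definite clause `H ← B₁,…,Bₙ`. -/
structure Clause where
  head : Atom
  body : List Atom
deriving DecidableEq

/-- The variables of a clause. -/
def Clause.vars (C : Clause) : Finset ℕ :=
  C.head.vars ∪ C.body.foldr (fun a s => a.vars ∪ s) ∅

/-- A (finite) definite program. -/
abbrev Program := Finset Clause

/-- `θ` unifies the tuples `(B₁,…,Bₙ)` and `(A₁,…,Aₙ)` of atoms. -/
def IsUnifierL (Bs As : List Atom) (θ : ℕ → Tm) : Prop :=
  Bs.map (Atom.subst θ) = As.map (Atom.subst θ)

/-- `θ` is an mgu of the tuples `(B₁,…,Bₙ)` and `(A₁,…,Aₙ)` of atoms. -/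
def IsMGUL (Bs As : List Atom) (θ : ℕ → Tm) : Prop :=
  IsUnifierL Bs As θ ∧ ∀ σ, IsUnifierL Bs As σ → ∃ δ, ∀ x, σ x = (θ x).subst δ

/-- The s-semantics immediate consequence operator `T^π_P`. -/
def Tpi (P : Program) (I : Set Atom) : Set Atom :=
  { A | ∃ C ∈ P, ∃ As : List Atom,
      As.length = C.body.length ∧ (∀ a ∈ As, a ∈ I) ∧
      (C.vars :: As.map Atom.vars).Pairwise Disjoint ∧
      ∃ θ, IsMGUL C.body As θ ∧ A = C.head.subst θ }

/-- `A'` is a variant of `A` (obtained from `A` by a renaming). -/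
def IsVariant (A A' : Atom) : Prop := ∃ γ, IsRenaming γ ∧ A' = A.subst γ

/-!
A variant `Hθγ` of `Hθ ∈ T^π_P(I)` is produced by the same clause and the same atoms of `I`,
because `θγ` is again an mgu: it still unifies, and a unifier `θδ` factors through `θγ` as
`θγ(γ⁻¹δ)`.
-/

lemma Tm.subst_comp (t : Tm) (θ δ : ℕ → Tm) :
    (t.subst θ).subst δ = t.subst (Subst.comp θ δ) := by
  induction t with
  | var x => rfl
  | const c => rfl
  | app s t ihs iht => simp only [Tm.subst, ihs, iht]

lemma Atom.subst_comp (A : Atom) (θ δ : ℕ → Tm) :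
    (A.subst θ).subst δ = A.subst (Subst.comp θ δ) := by
  simp only [Atom.subst, List.map_map, Function.comp_def, Tm.subst_comp]

lemma Atom.map_subst_comp (L : List Atom) (θ δ : ℕ → Tm) :
    (L.map (Atom.subst θ)).map (Atom.subst δ) = L.map (Atom.subst (Subst.comp θ δ)) := by
  simp only [List.map_map, Function.comp_def, Atom.subst_comp]

lemma IsUnifierL.comp {Bs As : List Atom} {θ : ℕ → Tm} (h : IsUnifierL Bs As θ)
    (δ : ℕ → Tm) : IsUnifierL Bs As (Subst.comp θ δ) := by
  unfold IsUnifierL at *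
  rw [← Atom.map_subst_comp, ← Atom.map_subst_comp, h]

lemma IsRenaming.exists_comp_eq {γ : ℕ → Tm} (hγ : IsRenaming γ) (δ : ℕ → Tm) :
    ∃ δ', Subst.comp γ δ' = δ := by
  obtain ⟨f, hf, rfl⟩ := hγ
  obtain ⟨g, hgf, -⟩ := Function.bijective_iff_has_inverse.mp hf
  exact ⟨fun y => δ (g y), funext fun x => by simp only [Subst.comp, Tm.subst, hgf x]⟩

lemma IsMGUL.comp_renaming {Bs As : List Atom} {θ γ : ℕ → Tm}
    (h : IsMGUL Bs As θ) (hγ : IsRenaming γ) : IsMGUL Bs As (Subst.comp θ γ) := by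
  refine ⟨h.1.comp γ, fun σ hσ => ?_⟩
  obtain ⟨δ, hδ⟩ := h.2 σ hσ
  obtain ⟨δ', rfl⟩ := hγ.exists_comp_eq δ
  exact ⟨δ', fun x => by rw [hδ x, ← Tm.subst_comp]; rfl⟩

/-- for every set of atoms `I`, `T^π_P(I)` is closed under
    variable renaming: variants of its members belong to it. -/
theorem Tpi_closed_renaming (P : Program) (I : Set Atom) (A A' : Atom)
    (hA : A ∈ Tpi P I) (hvar : IsVariant A A') : A' ∈ Tpi P I := by
  obtain ⟨C, hC, As, hlen, hI, hdisj, θ, hmgu, rfl⟩ := hA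
  obtain ⟨γ, hγ, rfl⟩ := hvar
  exact ⟨C, hC, As, hlen, hI, hdisj, Subst.comp θ γ, hmgu.comp_renaming hγ,
    Atom.subst_comp _ _ _⟩
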